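/- Define f₁ = Θ_{(1,0)} + Θ_{(0,1)}, f₂ = Θ_{(0,0)} + Θ_{(1,1)}, f₃ = Θ_{(0,0)} − Θ_{(1,1)}, and for i = 1,2,3 set E_i = (θ₁(2h|τ)·θ_{i+1}(0|τ) / (θ₁(h|τ)·θ_{i+1}(h|τ)))². Then for each i ∈ {1,2,3}: (M̃₁ f_i)(λ₁,λ₂) = E_i · f_i(λ₁,λ₂) and (M̃₂ f_i)(λ₁,λ₂) = 2E_i · f_i(λ₁,λ₂), for all h ∈ ℂ with θ₁(h|τ)·θ_{i+1}(h|τ) ≠ 0 and all (λ₁,λ₂) ∈ ℂ² at which every theta-function denominator occurring in M̃₁ and M̃₂ is nonzero. -/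

import Mathlib

open Complex

/-- The Jacobi theta function θ₁(z|τ). -/
noncomputable def th1 (τ z : ℂ) : ℂ :=
  ∑' k : ℤ, exp (2 * (Real.pi : ℂ) * I *
    ((z + 1/2) * ((k : ℂ) + 1/2) + ((k : ℂ) + 1/2)^2 * τ / 2))

/-- The Jacobi theta function θ₂(z|τ). -/
noncomputable def th2 (τ z : ℂ) : ℂ :=
  ∑' k : ℤ, exp (2 * (Real.pi : ℂ) * I *
    (z * ((k : ℂ) + 1/2) + ((k : ℂ) + 1/2)^2 * τ / 2))

/-- The Jacobi theta function θ₃(z|τ). -/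
noncomputable def th3 (τ z : ℂ) : ℂ :=
  ∑' k : ℤ, exp (2 * (Real.pi : ℂ) * I * (z * (k : ℂ) + (k : ℂ)^2 * τ / 2))

/-- The Jacobi theta function θ₄(z|τ). -/
noncomputable def th4 (τ z : ℂ) : ℂ :=
  ∑' k : ℤ, exp (2 * (Real.pi : ℂ) * I * ((z + 1/2) * (k : ℂ) + (k : ℂ)^2 * τ / 2))

/-- The classical theta function `Θ_{(a₁,a₂)}` of level one for `C₂`. -/
noncomputable def ThC2 (τ : ℂ) (a₁ a₂ : ℤ) (l : ℂ × ℂ) : ℂ :=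
  ∑' mn : ℤ × ℤ, exp (2 * (Real.pi : ℂ) * I *
    (((2 * mn.1 + a₁ : ℤ) : ℂ) * l.1 + ((2 * mn.2 + a₂ : ℤ) : ℂ) * l.2 +
      (((2 * mn.1 + a₁ : ℤ) : ℂ)^2 + ((2 * mn.2 + a₂ : ℤ) : ℂ)^2) * τ / 4))

/-- The difference operator `M̃₁` of type `C₂`. -/
noncomputable def M1t (τ h : ℂ) (f : ℂ × ℂ → ℂ) (l : ℂ × ℂ) : ℂ :=
  th1 τ (l.1 + l.2 - h) * th1 τ (l.1 - l.2 - h)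
      / (th1 τ (l.1 + l.2) * th1 τ (l.1 - l.2)) * f (l.1 + h, l.2)
  + th1 τ (l.1 + l.2 + h) * th1 τ (l.1 - l.2 + h)
      / (th1 τ (l.1 + l.2) * th1 τ (l.1 - l.2)) * f (l.1 - h, l.2)
  + th1 τ (l.1 + l.2 - h) * th1 τ (l.1 - l.2 + h)
      / (th1 τ (l.1 + l.2) * th1 τ (l.1 - l.2)) * f (l.1, l.2 + h)
  + th1 τ (l.1 + l.2 + h) * th1 τ (l.1 - l.2 - h)
      / (th1 τ (l.1 + l.2) * th1 τ (l.1 - l.2)) * f (l.1, l.2 - h)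

/-- The difference operator `M̃₂` of type `C₂`. -/
noncomputable def M2t (τ h : ℂ) (f : ℂ × ℂ → ℂ) (l : ℂ × ℂ) : ℂ :=
  (∑ ε ∈ ({1, -1} : Finset ℤ), ∑ ε' ∈ ({1, -1} : Finset ℤ),
    th1 τ ((ε : ℂ) * l.1 + (ε' : ℂ) * l.2 - h)
      / th1 τ ((ε : ℂ) * l.1 + (ε' : ℂ) * l.2 + h)
      * f (l.1 + (ε : ℂ) * h, l.2 + (ε' : ℂ) * h))
  + (∑ ε ∈ ({1, -1} : Finset ℤ), ∑ ε' ∈ ({1, -1} : Finset ℤ),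
      th1 τ ((ε : ℂ) * l.1 + (ε' : ℂ) * l.2 - h)
        * th1 τ ((ε : ℂ) * l.1 + (ε' : ℂ) * l.2 + 2 * h)
        / (th1 τ ((ε : ℂ) * l.1 + (ε' : ℂ) * l.2)
            * th1 τ ((ε : ℂ) * l.1 + (ε' : ℂ) * l.2 + h))) * f l

/-- The common eigenfunctions `f₁, f₂, f₃ ∈ Th₁^W`. -/
noncomputable def eigf (τ : ℂ) : Fin 3 → ℂ × ℂ → ℂ :=
  ![fun l => ThC2 τ 1 0 l + ThC2 τ 0 1 l,
    fun l => ThC2 τ 0 0 l + ThC2 τ 1 1 l,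
    fun l => ThC2 τ 0 0 l - ThC2 τ 1 1 l]

/-- The theta function `θ_{i+1}` attached to the eigenfunction `f_i`. -/
noncomputable def thNext (τ : ℂ) : Fin 3 → ℂ → ℂ := ![th2 τ, th3 τ, th4 τ]

/-!
With `θ[c](z | σ) = ∑ₖ exp 2πi((k + c) z + (k + c)² σ / 2)`, splitting the double series of
`θ[c₁](u | τ) θ[c₂](v | τ)` by the parity of the sum of the two summation indices expresses it
through theta functions of `2τ` evaluated at `u + v` and `u - v`. This gives two facts for
`g = θ_{i+1}`: first, `f_i(λ₁, λ₂) = g(λ₊) g(λ₋)`; second,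
`θ₁(x - y) g(x + y) + θ₁(x + y) g(x - y) = C(x) D(y)` for suitable `C`, `D`.
Comparing the second at `y = h` and `y = 0` gives
`θ₁(w - h) g(w + h) + θ₁(w + h) g(w - h) = e θ₁(w) g(w)` for a constant `e`, which `w = h`
and `θ₁(0) = 0` identify as `θ₁(2h) g(0) / (θ₁(h) g(h))`. So `g` is an eigenfunction of the
one-variable operator `A g(w) = (θ₁(w - h) g(w + h) + θ₁(w + h) g(w - h)) / θ₁(w)`, and on
products `g(λ₊) g(λ₋)` the operator `M̃₁` acts as `A ⊗ A` and `M̃₂` as `A² ⊗ 1 + 1 ⊗ A²`.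
-/

open scoped Real

noncomputable def thetaCharTerm (σ c z : ℂ) (k : ℤ) : ℂ :=
  cexp (2 * π * I * ((k + c) * z + (k + c) ^ 2 * σ / 2))

noncomputable def thetaChar (σ c z : ℂ) : ℂ := ∑' k : ℤ, thetaCharTerm σ c z k

lemma thetaCharTerm_eq_mul_jacobiTheta₂_term (σ c z : ℂ) (k : ℤ) :
    thetaCharTerm σ c z k =
      cexp (2 * π * I * (c * z + c ^ 2 * σ / 2)) * jacobiTheta₂_term k (z + c * σ) σ := by
  rw [thetaCharTerm, jacobiTheta₂_term, ← exp_add]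
  ring_nf

lemma summable_thetaCharTerm {σ : ℂ} (hσ : 0 < σ.im) (c z : ℂ) :
    Summable (thetaCharTerm σ c z) :=
  (((summable_jacobiTheta₂_term_iff _ σ).mpr hσ).mul_left _).congr fun k =>
    (thetaCharTerm_eq_mul_jacobiTheta₂_term σ c z k).symm

lemma thetaChar_mul_thetaChar_eq_tsum {σ : ℂ} (hσ : 0 < σ.im) (c₁ z₁ c₂ z₂ : ℂ) :
    thetaChar σ c₁ z₁ * thetaChar σ c₂ z₂ =
      ∑' p : ℤ × ℤ, thetaCharTerm σ c₁ z₁ p.1 * thetaCharTerm σ c₂ z₂ p.2 :=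
  tsum_mul_tsum_of_summable_norm (summable_thetaCharTerm hσ c₁ z₁).norm
    (summable_thetaCharTerm hσ c₂ z₂).norm

def evenSumEquiv : ℤ × ℤ ≃ {p : ℤ × ℤ | Even (p.1 + p.2)} where
  toFun ab := ⟨(ab.1 + ab.2, ab.1 - ab.2), by rw [Set.mem_ofPred_eq, Int.even_iff]; omega⟩
  invFun p := ((p.1.1 + p.1.2) / 2, (p.1.1 - p.1.2) / 2)
  left_inv ab := by ext <;> dsimp only <;> omega
  right_inv := by
    rintro ⟨⟨k, l⟩, hp⟩
    rw [Set.mem_ofPred_eq, Int.even_iff] at hp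
    ext <;> dsimp only <;> omega

def oddSumEquiv : ℤ × ℤ ≃ ↥({p : ℤ × ℤ | Even (p.1 + p.2)}ᶜ) where
  toFun ab := ⟨(ab.1 + ab.2 + 1, ab.1 - ab.2), by
    rw [Set.mem_compl_iff, Set.mem_ofPred_eq, Int.even_iff]; omega⟩
  invFun p := ((p.1.1 + p.1.2 - 1) / 2, (p.1.1 - p.1.2 - 1) / 2)
  left_inv ab := by ext <;> dsimp only <;> omega
  right_inv := by
    rintro ⟨⟨k, l⟩, hp⟩
    rw [Set.mem_compl_iff, Set.mem_ofPred_eq, Int.even_iff] at hp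
    ext <;> dsimp only <;> omega

/-- Reindex the double series by `(k, l) = (a + b, a - b)` when `k + l` is even and by
`(k, l) = (a + b + 1, a - b)` when it is odd. -/
lemma thetaChar_mul_thetaChar {σ : ℂ} (hσ : 0 < σ.im) (c₁ c₂ u v : ℂ) :
    thetaChar σ c₁ u * thetaChar σ c₂ v =
      thetaChar (2 * σ) ((c₁ + c₂) / 2) (u + v) * thetaChar (2 * σ) ((c₁ - c₂) / 2) (u - v) +
      thetaChar (2 * σ) ((c₁ + c₂ + 1) / 2) (u + v) *
        thetaChar (2 * σ) ((c₁ - c₂ + 1) / 2) (u - v) := by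
  have hσ₂ : 0 < (2 * σ).im := by simpa using hσ
  have hF : Summable fun p : ℤ × ℤ => thetaCharTerm σ c₁ u p.1 * thetaCharTerm σ c₂ v p.2 :=
    summable_mul_of_summable_norm (summable_thetaCharTerm hσ c₁ u).norm
      (summable_thetaCharTerm hσ c₂ v).norm
  rw [thetaChar_mul_thetaChar_eq_tsum hσ, thetaChar_mul_thetaChar_eq_tsum hσ₂,
    thetaChar_mul_thetaChar_eq_tsum hσ₂, ← (hF.subtype _).tsum_add_tsum_compl (hF.subtype _),
    ← evenSumEquiv.tsum_eq, ← oddSumEquiv.tsum_eq]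
  congr 1 <;> refine tsum_congr fun ab => ?_ <;>
    simp only [evenSumEquiv, oddSumEquiv, Equiv.coe_fn_mk, thetaCharTerm, ← exp_add] <;>
    push_cast <;> ring_nf

lemma thetaChar_mul_thetaChar_same {σ : ℂ} (hσ : 0 < σ.im) (c a b : ℂ) :
    thetaChar σ c (a + b) * thetaChar σ c (a - b) =
      thetaChar (2 * σ) c (2 * a) * thetaChar (2 * σ) 0 (2 * b) +
      thetaChar (2 * σ) (c + 1 / 2) (2 * a) * thetaChar (2 * σ) (1 / 2) (2 * b) := by
  rw [thetaChar_mul_thetaChar hσ]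
  congr 3 <;> ring

lemma thetaChar_char_add_one (σ c z : ℂ) : thetaChar σ (c + 1) z = thetaChar σ c z := by
  rw [thetaChar, thetaChar, ← (Equiv.addRight (1 : ℤ)).tsum_eq (thetaCharTerm σ c z)]
  refine tsum_congr fun k => ?_
  simp only [thetaCharTerm, Equiv.coe_addRight]
  push_cast; ring_nf

lemma thetaChar_neg (σ c z : ℂ) : thetaChar σ c (-z) = thetaChar σ (-c) z := by
  rw [thetaChar, thetaChar, ← (Equiv.neg ℤ).tsum_eq (thetaCharTerm σ (-c) z)]
  refine tsum_congr fun k => ?_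
  simp only [thetaCharTerm, Equiv.neg_apply]
  push_cast; ring_nf

lemma thetaChar_add_one (σ c z : ℂ) :
    thetaChar σ c (z + 1) = cexp (2 * π * I * c) * thetaChar σ c z := by
  rw [thetaChar, thetaChar, ← tsum_mul_left]
  refine tsum_congr fun k => ?_
  rw [thetaCharTerm, thetaCharTerm, ← exp_add, exp_eq_exp_iff_exists_int]
  exact ⟨k, by ring⟩

lemma thetaChar_neg_of_add_eq_one {c c' : ℂ} (hc : c + c' = 1) (σ z : ℂ) :
    thetaChar σ c (-z) = thetaChar σ c' z := by
  rw [thetaChar_neg, ← thetaChar_char_add_one, show -c + 1 = c' by linear_combination -hc]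

lemma thetaChar_reflect_half {c c' : ℂ} (hc : c + c' = 1) (σ w : ℂ) :
    thetaChar σ c (-w + 1 / 2) = cexp (2 * π * I * c) * thetaChar σ c' (w + 1 / 2) := by
  have hexp : cexp (2 * π * I * c) * cexp (2 * π * I * c') = 1 := by
    rw [← exp_add, ← mul_add, hc, mul_one, exp_two_pi_mul_I]
  rw [show -w + 1 / 2 = -(w - 1 / 2) by ring, thetaChar_neg_of_add_eq_one hc,
    show w + 1 / 2 = w - 1 / 2 + 1 by ring, thetaChar_add_one, ← mul_assoc, hexp, one_mul]

lemma thetaChar_zero_reflect_half (σ w : ℂ) :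
    thetaChar σ 0 (-w + 1 / 2) = thetaChar σ 0 (w + 1 / 2) := by
  rw [thetaChar_reflect_half (c' := 0 + 1) (by ring), thetaChar_char_add_one, mul_zero, exp_zero,
    one_mul]

lemma thetaChar_half_reflect_half (σ w : ℂ) :
    thetaChar σ (1 / 2) (-w + 1 / 2) = -thetaChar σ (1 / 2) (w + 1 / 2) := by
  rw [thetaChar_reflect_half (c' := 1 / 2) (by norm_num),
    show 2 * π * I * (1 / 2) = π * I by ring, exp_pi_mul_I, neg_one_mul]

lemma thetaChar_quarter_reflect_half (σ w : ℂ) :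
    thetaChar σ (1 / 4) (-w + 1 / 2) = I * thetaChar σ (3 / 4) (w + 1 / 2) := by
  rw [thetaChar_reflect_half (c' := 3 / 4) (by norm_num),
    show 2 * π * I * (1 / 4) = π / 2 * I by ring, exp_pi_div_two_mul_I]

lemma thetaChar_three_quarters_reflect_half (σ w : ℂ) :
    thetaChar σ (3 / 4) (-w + 1 / 2) = -I * thetaChar σ (1 / 4) (w + 1 / 2) := by
  rw [thetaChar_reflect_half (c' := 1 / 4) (by norm_num),
    show 2 * π * I * (3 / 4) = π / 2 * I + π * I by ring, exp_add_pi_mul_I, exp_pi_div_two_mul_I]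

lemma th1_eq_thetaChar (τ z : ℂ) : th1 τ z = thetaChar τ (1 / 2) (z + 1 / 2) := by
  rw [th1, thetaChar]; congr! 2 with k; rw [thetaCharTerm]; ring_nf

lemma th2_eq_thetaChar (τ z : ℂ) : th2 τ z = thetaChar τ (1 / 2) z := by
  rw [th2, thetaChar]; congr! 2 with k; rw [thetaCharTerm]; ring_nf

lemma th3_eq_thetaChar (τ z : ℂ) : th3 τ z = thetaChar τ 0 z := by
  rw [th3, thetaChar]; congr! 2 with k; rw [thetaCharTerm]; ring_nf

lemma th4_eq_thetaChar (τ z : ℂ) : th4 τ z = thetaChar τ 0 (z + 1 / 2) := by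
  rw [th4, thetaChar]; congr! 2 with k; rw [thetaCharTerm]; ring_nf

lemma th1_neg (τ z : ℂ) : th1 τ (-z) = -th1 τ z := by
  rw [th1_eq_thetaChar, th1_eq_thetaChar, thetaChar_half_reflect_half]

lemma th1_zero (τ : ℂ) : th1 τ 0 = 0 := by
  simpa [CharZero.eq_neg_self_iff] using th1_neg τ 0

lemma ThC2_eq_thetaChar_mul {τ : ℂ} (hτ : 0 < τ.im) (a₁ a₂ : ℤ) (l : ℂ × ℂ) :
    ThC2 τ a₁ a₂ l =
      thetaChar (2 * τ) (a₁ / 2) (2 * l.1) * thetaChar (2 * τ) (a₂ / 2) (2 * l.2) := by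
  rw [ThC2, thetaChar_mul_thetaChar_eq_tsum (by simpa using hτ)]
  refine tsum_congr fun p => ?_
  rw [thetaCharTerm, thetaCharTerm, ← exp_add]
  push_cast; ring_nf

lemma th1_mul_th2_add_th1_mul_th2 {τ : ℂ} (hτ : 0 < τ.im) (x y : ℂ) :
    th1 τ (x - y) * th2 τ (x + y) + th1 τ (x + y) * th2 τ (x - y) =
      2 * thetaChar (2 * τ) (1 / 2) (2 * x + 1 / 2) * thetaChar (2 * τ) 0 (2 * y + 1 / 2) := by
  set X := 2 * x + 1 / 2
  calc _ = thetaChar (2 * τ) (1 / 2) X * thetaChar (2 * τ) 0 (-(2 * y) + 1 / 2)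
          + thetaChar (2 * τ) (0 + 1) X * thetaChar (2 * τ) (1 / 2) (-(2 * y) + 1 / 2)
          + (thetaChar (2 * τ) (1 / 2) X * thetaChar (2 * τ) 0 (2 * y + 1 / 2)
          + thetaChar (2 * τ) (0 + 1) X * thetaChar (2 * τ) (1 / 2) (2 * y + 1 / 2)) := by
        simp only [th1_eq_thetaChar, th2_eq_thetaChar, thetaChar_mul_thetaChar hτ]
        congr 4 <;> ring
    _ = _ := by
        rw [thetaChar_zero_reflect_half, thetaChar_half_reflect_half]
        ring

lemma th1_mul_th3_add_th1_mul_th3 {τ : ℂ} (hτ : 0 < τ.im) (x y : ℂ) :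
    th1 τ (x - y) * th3 τ (x + y) + th1 τ (x + y) * th3 τ (x - y) =
      (thetaChar (2 * τ) (1 / 4) (2 * x + 1 / 2) -
          I * thetaChar (2 * τ) (3 / 4) (2 * x + 1 / 2)) *
        (thetaChar (2 * τ) (1 / 4) (2 * y + 1 / 2) +
          I * thetaChar (2 * τ) (3 / 4) (2 * y + 1 / 2)) := by
  set X := 2 * x + 1 / 2
  calc _ = thetaChar (2 * τ) (1 / 4) X * thetaChar (2 * τ) (1 / 4) (-(2 * y) + 1 / 2)
          + thetaChar (2 * τ) (3 / 4) X * thetaChar (2 * τ) (3 / 4) (-(2 * y) + 1 / 2)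
          + (thetaChar (2 * τ) (1 / 4) X * thetaChar (2 * τ) (1 / 4) (2 * y + 1 / 2)
          + thetaChar (2 * τ) (3 / 4) X * thetaChar (2 * τ) (3 / 4) (2 * y + 1 / 2)) := by
        simp only [th1_eq_thetaChar, th3_eq_thetaChar, thetaChar_mul_thetaChar hτ]
        congr 4 <;> ring
    _ = _ := by
        rw [thetaChar_quarter_reflect_half, thetaChar_three_quarters_reflect_half]
        linear_combination
          thetaChar (2 * τ) (3 / 4) X * thetaChar (2 * τ) (3 / 4) (2 * y + 1 / 2) * I_sq

lemma th1_mul_th4_add_th1_mul_th4 {τ : ℂ} (hτ : 0 < τ.im) (x y : ℂ) :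
    th1 τ (x - y) * th4 τ (x + y) + th1 τ (x + y) * th4 τ (x - y) =
      (thetaChar (2 * τ) (1 / 4) (2 * x + 1) + thetaChar (2 * τ) (3 / 4) (2 * x + 1)) *
      (thetaChar (2 * τ) (1 / 4) (2 * y) + thetaChar (2 * τ) (3 / 4) (2 * y)) := by
  set X := 2 * x + 1
  calc _ = thetaChar (2 * τ) (1 / 4) X * thetaChar (2 * τ) (1 / 4) (-(2 * y))
          + thetaChar (2 * τ) (3 / 4) X * thetaChar (2 * τ) (3 / 4) (-(2 * y))
          + (thetaChar (2 * τ) (1 / 4) X * thetaChar (2 * τ) (1 / 4) (2 * y)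
          + thetaChar (2 * τ) (3 / 4) X * thetaChar (2 * τ) (3 / 4) (2 * y)) := by
        simp only [th1_eq_thetaChar, th4_eq_thetaChar, thetaChar_mul_thetaChar hτ]
        congr 4 <;> ring
    _ = _ := by
        rw [thetaChar_neg_of_add_eq_one (c' := 3 / 4) (by norm_num),
          thetaChar_neg_of_add_eq_one (c' := 1 / 4) (by norm_num)]
        ring

lemma eigf_apply {τ : ℂ} (hτ : 0 < τ.im) (i : Fin 3) (l : ℂ × ℂ) :
    eigf τ i l = thNext τ i (l.1 + l.2) * thNext τ i (l.1 - l.2) := by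
  obtain ⟨a, b⟩ := l
  fin_cases i <;>
    simp only [eigf, thNext, Fin.zero_eta, Fin.mk_one, Fin.reduceFinMk, Matrix.cons_val,
      ThC2_eq_thetaChar_mul hτ]
  · rw [th2_eq_thetaChar, th2_eq_thetaChar, thetaChar_mul_thetaChar_same hτ,
      show (1 / 2 + 1 / 2 : ℂ) = 0 + 1 by norm_num, thetaChar_char_add_one]
    push_cast; ring_nf
  · rw [th3_eq_thetaChar, th3_eq_thetaChar, thetaChar_mul_thetaChar_same hτ]
    push_cast; ring_nf
  · rw [th4_eq_thetaChar, th4_eq_thetaChar, show a - b + 1 / 2 = a + 1 / 2 - b by ring,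
      show a + b + 1 / 2 = a + 1 / 2 + b by ring, thetaChar_mul_thetaChar_same hτ,
      show 2 * (a + 1 / 2) = 2 * a + 1 by ring, thetaChar_add_one, thetaChar_add_one]
    rw [mul_zero, exp_zero, zero_add, show 2 * π * I * (1 / 2) = π * I by ring, exp_pi_mul_I]
    push_cast; ring_nf

noncomputable def diffOpA₁ (t : ℂ → ℂ) (h : ℂ) (g : ℂ → ℂ) (w : ℂ) : ℂ :=
  (t (w - h) * g (w + h) + t (w + h) * g (w - h)) / t w

section Shift

variable {t g : ℂ → ℂ} {h e : ℂ}

lemma shift_eq_of_addition {C D : ℂ → ℂ} (ht0 : t 0 = 0)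
    (hadd : ∀ x y, t (x - y) * g (x + y) + t (x + y) * g (x - y) = C x * D y)
    (hh : t h * g h ≠ 0) (w : ℂ) :
    t (w - h) * g (w + h) + t (w + h) * g (w - h) =
      t (2 * h) * g 0 / (t h * g h) * (t w * g w) := by
  have hw := hadd w h
  have hw₀ := hadd w 0
  have hh₀ := hadd h 0
  have hhh := hadd h h
  simp only [sub_zero, add_zero, sub_self, ht0, zero_mul, zero_add, ← two_mul] at hw₀ hh₀ hhh
  rw [hw, div_mul_eq_mul_div, eq_div_iff hh]
  linear_combination (C w * D h / 2) * hh₀ - (t w * g w) * hhh - (C h * D h / 2) * hw₀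

lemma diffOpA₁_eq_of_shift
    (hS : ∀ w, t (w - h) * g (w + h) + t (w + h) * g (w - h) = e * (t w * g w))
    {w : ℂ} (hw : t w ≠ 0) : diffOpA₁ t h g w = e * g w := by
  rw [diffOpA₁, hS, mul_comm (t w), ← mul_assoc, mul_div_cancel_right₀ _ hw]

lemma diffOpA₁_diffOpA₁_eq_of_shift
    (hS : ∀ w, t (w - h) * g (w + h) + t (w + h) * g (w - h) = e * (t w * g w))
    {w : ℂ} (hw : t w ≠ 0) (hwp : t (w + h) ≠ 0) (hwm : t (w - h) ≠ 0) :
    diffOpA₁ t h (diffOpA₁ t h g) w = e ^ 2 * g w := by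
  rw [diffOpA₁, diffOpA₁_eq_of_shift hS hwp, diffOpA₁_eq_of_shift hS hwm]
  field_simp
  linear_combination e * hS w

end Shift

section Products

variable {f : ℂ × ℂ → ℂ} {g : ℂ → ℂ}

lemma M1t_eq_diffOpA₁_mul (τ h : ℂ) (hf : ∀ p : ℂ × ℂ, f p = g (p.1 + p.2) * g (p.1 - p.2))
    (l : ℂ × ℂ) :
    M1t τ h f l = diffOpA₁ (th1 τ) h g (l.1 + l.2) * diffOpA₁ (th1 τ) h g (l.1 - l.2) := by
  simp only [M1t, diffOpA₁, hf]
  ring_nf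

lemma M2t_eq_diffOpA₁_diffOpA₁ (τ h : ℂ) (hf : ∀ p : ℂ × ℂ, f p = g (p.1 + p.2) * g (p.1 - p.2))
    {l : ℂ × ℂ} (hu : th1 τ (l.1 + l.2) ≠ 0) (hv : th1 τ (l.1 - l.2) ≠ 0) :
    M2t τ h f l = g (l.1 - l.2) * diffOpA₁ (th1 τ) h (diffOpA₁ (th1 τ) h g) (l.1 + l.2) +
      g (l.1 + l.2) * diffOpA₁ (th1 τ) h (diffOpA₁ (th1 τ) h g) (l.1 - l.2) := by
  obtain ⟨x, y⟩ := l
  have ratio_neg (w : ℂ) : th1 τ (-w - h) / th1 τ (-w + h) = th1 τ (w + h) / th1 τ (w - h) := by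
    rw [show -w - h = -(w + h) by ring, show -w + h = -(w - h) by ring, th1_neg, th1_neg,
      neg_div_neg_eq]
  have coeff_neg (w : ℂ) : th1 τ (-w - h) * th1 τ (-w + 2 * h) / (th1 τ (-w) * th1 τ (-w + h)) =
      th1 τ (w + h) * th1 τ (w - 2 * h) / (th1 τ w * th1 τ (w - h)) := by
    rw [show -w - h = -(w + h) by ring, show -w + 2 * h = -(w - 2 * h) by ring,
      show -w + h = -(w - h) by ring, th1_neg, th1_neg, th1_neg, th1_neg, neg_mul_neg, neg_mul_neg]
  simp only [M2t, Finset.sum_pair (show (1 : ℤ) ≠ -1 by norm_num), Int.cast_one, Int.cast_neg,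
    one_mul, neg_one_mul, ← sub_eq_add_neg, hf]
  rw [show -x - y = -(x + y) by ring, show -x + y = -(x - y) by ring, ratio_neg, ratio_neg,
    coeff_neg, coeff_neg]
  simp only [diffOpA₁]
  ring_nf
  -- the two sides differ only by factors `θ₁(w) * θ₁(w)⁻¹` at `w = x ± y`
  linear_combination
    (-g (x - y) * (th1 τ (x + y - h) / th1 τ (x + y + h) * g (x + y + h * 2)
      + th1 τ (x + y + h) / th1 τ (x + y - h) * g (x + y - h * 2))) * mul_inv_cancel₀ hu
    - g (x + y) * (th1 τ (x - y - h) / th1 τ (x - y + h) * g (x - y + h * 2)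
      + th1 τ (x - y + h) / th1 τ (x - y - h) * g (x - y - h * 2)) * mul_inv_cancel₀ hv

end Products

lemma exists_th1_mul_thNext_add {τ : ℂ} (hτ : 0 < τ.im) (i : Fin 3) :
    ∃ C D : ℂ → ℂ, ∀ x y,
      th1 τ (x - y) * thNext τ i (x + y) + th1 τ (x + y) * thNext τ i (x - y) = C x * D y := by
  fin_cases i
  · exact ⟨_, _, th1_mul_th2_add_th1_mul_th2 hτ⟩
  · exact ⟨_, _, th1_mul_th3_add_th1_mul_th3 hτ⟩
  · exact ⟨_, _, th1_mul_th4_add_th1_mul_th4 hτ⟩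

lemma th1_ne_zero_of_forall_sign {τ h : ℂ} {l : ℂ × ℂ}
    (hden : ∀ ε ∈ ({1, -1} : Finset ℤ), ∀ ε' ∈ ({1, -1} : Finset ℤ),
      th1 τ ((ε : ℂ) * l.1 + (ε' : ℂ) * l.2) ≠ 0 ∧
      th1 τ ((ε : ℂ) * l.1 + (ε' : ℂ) * l.2 + h) ≠ 0)
    {w : ℂ} (hw : w = l.1 + l.2 ∨ w = l.1 - l.2) :
    th1 τ w ≠ 0 ∧ th1 τ (w + h) ≠ 0 ∧ th1 τ (w - h) ≠ 0 := by
  have of_sign (ε ε' : ℤ) (hε : ε ∈ ({1, -1} : Finset ℤ)) (hε' : ε' ∈ ({1, -1} : Finset ℤ))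
      (hw : w = ε * l.1 + ε' * l.2) :
      th1 τ w ≠ 0 ∧ th1 τ (w + h) ≠ 0 ∧ th1 τ (w - h) ≠ 0 := by
    obtain ⟨hw₀, hwp⟩ := hden ε hε ε' hε'
    obtain ⟨-, hwm⟩ := hden (-ε) (by simp at hε ⊢; omega) (-ε') (by simp at hε' ⊢; omega)
    rw [show ((-ε : ℤ) : ℂ) * l.1 + ((-ε' : ℤ) : ℂ) * l.2 + h = -(w - h) by
      push_cast; rw [hw]; ring, th1_neg, neg_ne_zero] at hwm
    exact ⟨hw ▸ hw₀, hw ▸ hwp, hwm⟩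
  rcases hw with rfl | rfl
  · exact of_sign 1 1 (by simp) (by simp) (by push_cast; ring)
  · exact of_sign 1 (-1) (by simp) (by simp) (by push_cast; ring)

/-- Theorem 4 ("main"): `f₁, f₂, f₃` are common eigenfunctions of `M̃₁` and `M̃₂`
with eigenvalues `E_i = (θ₁(2h)θ_{i+1}(0)/(θ₁(h)θ_{i+1}(h)))²` and `2E_i`. -/
theorem stmt_5 (τ : ℂ) (hτ : 0 < τ.im) (h : ℂ) (i : Fin 3)
    (hh : th1 τ h * thNext τ i h ≠ 0) (l : ℂ × ℂ)
    (hden : ∀ ε ∈ ({1, -1} : Finset ℤ), ∀ ε' ∈ ({1, -1} : Finset ℤ),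
      th1 τ ((ε : ℂ) * l.1 + (ε' : ℂ) * l.2) ≠ 0 ∧
      th1 τ ((ε : ℂ) * l.1 + (ε' : ℂ) * l.2 + h) ≠ 0) :
    M1t τ h (eigf τ i) l
      = (th1 τ (2 * h) * thNext τ i 0 / (th1 τ h * thNext τ i h))^2 * eigf τ i l ∧
    M2t τ h (eigf τ i) l
      = 2 * (th1 τ (2 * h) * thNext τ i 0 / (th1 τ h * thNext τ i h))^2 * eigf τ i l := by
  obtain ⟨C, D, hadd⟩ := exists_th1_mul_thNext_add hτ i
  have hS := shift_eq_of_addition (th1_zero τ) hadd hh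
  have hf := eigf_apply hτ i
  obtain ⟨hu, hup, hum⟩ := th1_ne_zero_of_forall_sign hden (Or.inl rfl)
  obtain ⟨hv, hvp, hvm⟩ := th1_ne_zero_of_forall_sign hden (Or.inr rfl)
  constructor
  · rw [M1t_eq_diffOpA₁_mul τ h hf, diffOpA₁_eq_of_shift hS hu, diffOpA₁_eq_of_shift hS hv, hf]
    ring
  · rw [M2t_eq_diffOpA₁_diffOpA₁ τ h hf hu hv, diffOpA₁_diffOpA₁_eq_of_shift hS hu hup hum,
      diffOpA₁_diffOpA₁_eq_of_shift hS hv hvp hvm, hf]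
    ring
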